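/- For n ≥ 3 and p,q,p′,q′ ≥ 1 with p+q = p′+q′ = n−1, the identity x^p h x^q k t ≈ h k x^{p′} t x^{q′} is equationally equivalent to the three identities x^p h x^q ≈ h x^{n−1}, x^{n−1} k ≈ k x^{n−1}, and x^{n−1} t ≈ x^{p′} t x^{q′}. -/

import Mathlib

abbrev Word := List ℕ

def subst (φ : ℕ → Word) (w : Word) : Word := w.flatMap φ

inductive Deduce (S : Set (Word × Word)) : Word → Word → Prop
  | refl (w : Word) : Deduce S w w
  | symm {u v : Word} : Deduce S u v → Deduce S v u
  | trans {u v w : Word} : Deduce S u v → Deduce S v w → Deduce S u w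
  | step (a b : Word) (φ : ℕ → Word) {s t : Word} (h : (s, t) ∈ S) :
      Deduce S (a ++ subst φ s ++ b) (a ++ subst φ t ++ b)

def FM (w : Word) : Type := Option {u : Word // u <:+: w}

def fmul {w : Word} : FM w → FM w → FM w
  | some u, some v =>
      if h : (u.1 ++ v.1) <:+: w then some ⟨u.1 ++ v.1, h⟩ else none
  | _, _ => none

def fone (w : Word) : FM w := some ⟨[], List.nil_infix⟩

theorem fmul_none_left {w : Word} (a : FM w) : fmul none a = none := rfl

theorem fmul_none_right {w : Word} (a : FM w) : fmul a none = none := by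
  rcases a with _ | u <;> rfl

theorem fmul_some {w : Word} (u v : {u : Word // u <:+: w}) :
    fmul (some u) (some v) =
      if h : (u.1 ++ v.1) <:+: w then some ⟨u.1 ++ v.1, h⟩ else none := rfl

theorem fmul_assoc {w : Word} (a b c : FM w) : fmul (fmul a b) c = fmul a (fmul b c) := by
  rcases a with _ | u
  · rfl
  rcases b with _ | v
  · rfl
  rcases c with _ | t
  · rw [fmul_none_right]; try rfl
  rw [fmul_some, fmul_some]
  by_cases h : (u.1 ++ v.1 ++ t.1) <:+: w
  · have h1 : (u.1 ++ v.1) <:+: w := List.IsInfix.trans ⟨[], t.1, by simp⟩ h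
    have h2 : (v.1 ++ t.1) <:+: w := List.IsInfix.trans ⟨u.1, [], by simp⟩ h
    rw [dif_pos h1, fmul_some, dif_pos h2, fmul_some, dif_pos h,
      dif_pos (show (u.1 ++ (v.1 ++ t.1)) <:+: w by simpa [List.append_assoc] using h)]
    simp [List.append_assoc]
    try rfl
  · by_cases h1 : (u.1 ++ v.1) <:+: w
    · rw [dif_pos h1, fmul_some, dif_neg h]
      by_cases h2 : (v.1 ++ t.1) <:+: w
      · rw [dif_pos h2, fmul_some,
          dif_neg (fun hh => h (by simpa [List.append_assoc] using hh))]
      · rw [dif_neg h2]; try rfl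
    · rw [dif_neg h1]; show (none : FM w) = _
      by_cases h2 : (v.1 ++ t.1) <:+: w
      · rw [dif_pos h2, fmul_some,
          dif_neg (fun hh => h1 (List.IsInfix.trans ⟨[], t.1, by simp⟩ hh))]
      · rw [dif_neg h2]; try rfl

instance (w : Word) : Monoid (FM w) where
  mul := fmul
  one := fone w
  mul_assoc := fmul_assoc
  one_mul := by
    rintro (_ | u)
    · rfl
    · show fmul (fone w) (some u) = some u
      rw [fone, fmul_some, dif_pos (by simpa using u.2)]
      simp
      try rfl
  mul_one := by
    rintro (_ | u)
    · rfl
    · show fmul (some u) (fone w) = some u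
      rw [fone, fmul_some, dif_pos (by simpa using u.2)]
      simp
      try rfl

def SatId (M : Type) [Monoid M] (p : Word × Word) : Prop :=
  ∀ φ : ℕ → M, (p.1.map φ).prod = (p.2.map φ).prod

def VSat (E : Set (Word × Word)) (p : Word × Word) : Prop :=
  ∀ (M : Type) [Monoid M], (∀ q ∈ E, SatId M q) → SatId M p

def ids0 : Set (Word × Word) :=
  {([0,1,2,0,3,1],[1,0,2,0,3,1]), ([0,2,0,1,3,1],[0,2,1,0,3,1]), ([0,2,1,3,0,1],[0,2,1,3,1,0])}

def idA (n : ℕ) : Word × Word :=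
  (List.replicate n 0 ++ (List.range n).map (· + 1),
   ((List.range n).map (fun i => [i + 1, 0])).flatten)

def rigid (e₀ : ℕ) (es : List ℕ) : Word :=
  List.replicate e₀ 0 ++ (((List.range es.length).zip es).map (fun p => (p.1 + 1) :: List.replicate p.2 0)).flatten

def Bword (n i : ℕ) : Word := List.replicate i 0 ++ 1 :: List.replicate (n - 1 - i) 0

def wmr (m r : ℕ) : Word := rigid (m - 1) (List.replicate r (m - 1))

def X (p : ℕ) : Word := List.replicate p 0


/-! Rewriting with the three identities in turn carries `x^p h x^q k t` to `h k x^{p'} t x^{q'}`.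
Conversely, each of the three identities is the image of the single one under the substitution
that fixes `x` and one of `h, k, t` and erases the other two; `p + q = p' + q' = n - 1` makes the
powers of `x` match. -/

namespace Deduce

variable {S : Set (Word × Word)}

theorem subst_of_mem (φ : ℕ → Word) {s t : Word} (h : (s, t) ∈ S) :
    Deduce S (subst φ s) (subst φ t) := by
  simpa using step [] [] φ h

theorem append_of_mem (a b : Word) {s t : Word} (h : (s, t) ∈ S) :
    Deduce S (a ++ s ++ b) (a ++ t ++ b) := by
  simpa [subst] using step a b (fun i => [i]) h

end Deduce

@[simp]
theorem subst_nil (φ : ℕ → Word) : subst φ [] = [] := rfl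

@[simp]
theorem subst_cons (φ : ℕ → Word) (i : ℕ) (w : Word) : subst φ (i :: w) = φ i ++ subst φ w :=
  List.flatMap_cons

@[simp]
theorem subst_append (φ : ℕ → Word) (u v : Word) : subst φ (u ++ v) = subst φ u ++ subst φ v :=
  List.flatMap_append

theorem subst_X {φ : ℕ → Word} (h : φ 0 = [0]) (m : ℕ) : subst φ (X m) = X m := by
  induction m with
  | zero => rfl
  | succ m ih => simpa [X, List.replicate_succ, h] using ih

@[simp]
theorem X_append_X (a b : ℕ) : X a ++ X b = X (a + b) := (List.replicate_add a b 0).symm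

@[simp]
theorem X_append_X_append (a b : ℕ) (w : Word) : X a ++ (X b ++ w) = X (a + b) ++ w := by
  rw [← List.append_assoc, X_append_X]

def keepXAnd (v : ℕ) (i : ℕ) : Word := if i = 0 ∨ i = v then [i] else []

@[simp]
theorem subst_keepXAnd_X (v m : ℕ) : subst (keepXAnd v) (X m) = X m :=
  subst_X (by simp [keepXAnd]) m

theorem stmt7_general (n p q p' q' : ℕ)
    (hpq : p + q = n - 1) (hpq' : p' + q' = n - 1) :
    Deduce {(X p ++ [1] ++ X q, [1] ++ X (n-1)),
            (X (n-1) ++ [2], [2] ++ X (n-1)),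
            (X (n-1) ++ [3], X p' ++ [3] ++ X q')}
      (X p ++ [1] ++ X q ++ [2, 3]) ([1, 2] ++ X p' ++ [3] ++ X q') ∧
    Deduce {(X p ++ [1] ++ X q ++ [2, 3], [1, 2] ++ X p' ++ [3] ++ X q')}
      (X p ++ [1] ++ X q) ([1] ++ X (n-1)) ∧
    Deduce {(X p ++ [1] ++ X q ++ [2, 3], [1, 2] ++ X p' ++ [3] ++ X q')}
      (X (n-1) ++ [2]) ([2] ++ X (n-1)) ∧
    Deduce {(X p ++ [1] ++ X q ++ [2, 3], [1, 2] ++ X p' ++ [3] ++ X q')}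
      (X (n-1) ++ [3]) (X p' ++ [3] ++ X q') := by
  refine ⟨?_, ?_, ?_, ?_⟩
  · -- `x^p h x^q k t ≈ h x^{n-1} k t ≈ h k x^{n-1} t ≈ h k x^{p'} t x^{q'}`
    set S : Set (Word × Word) := {(X p ++ [1] ++ X q, [1] ++ X (n-1)),
      (X (n-1) ++ [2], [2] ++ X (n-1)), (X (n-1) ++ [3], X p' ++ [3] ++ X q')}
    have hh := Deduce.append_of_mem (S := S) [] [2, 3] (Set.mem_insert _ _)
    have hk := Deduce.append_of_mem (S := S) [1] [3] (.inr (Set.mem_insert _ _))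
    have ht := Deduce.append_of_mem (S := S) [1, 2] [] (.inr (.inr rfl))
    simp only [List.nil_append, List.append_nil, List.append_assoc, List.cons_append] at hh hk ht ⊢
    exact hh.trans (hk.trans ht)
  · convert Deduce.subst_of_mem (S := {_}) (keepXAnd 1) rfl using 1 <;>
      simp [keepXAnd, hpq']
  · convert Deduce.subst_of_mem (S := {_}) (keepXAnd 2) rfl using 1 <;>
      simp [keepXAnd, hpq, hpq']
  · convert Deduce.subst_of_mem (S := {_}) (keepXAnd 3) rfl using 1 <;>
      simp [keepXAnd, hpq]

/-- For `n ≥ 3` and `p,q,p',q' ≥ 1` with `p+q = p'+q' = n-1`, the identity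
`x^p h x^q k t ≈ h k x^{p'} t x^{q'}` is equationally equivalent to the identities
`x^p h x^q ≈ h x^{n-1}`, `x^{n-1} k ≈ k x^{n-1}`, and `x^{n-1} t ≈ x^{p'} t x^{q'}`.
(Variables: `x = 0`, `h = 1`, `k = 2`, `t = 3`.) -/
theorem stmt7 (n p q p' q' : ℕ) (hn : 3 ≤ n)
    (hp : 1 ≤ p) (hq : 1 ≤ q) (hp' : 1 ≤ p') (hq' : 1 ≤ q')
    (hpq : p + q = n - 1) (hpq' : p' + q' = n - 1) :
    Deduce {(X p ++ [1] ++ X q, [1] ++ X (n-1)),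
            (X (n-1) ++ [2], [2] ++ X (n-1)),
            (X (n-1) ++ [3], X p' ++ [3] ++ X q')}
      (X p ++ [1] ++ X q ++ [2, 3]) ([1, 2] ++ X p' ++ [3] ++ X q') ∧
    Deduce {(X p ++ [1] ++ X q ++ [2, 3], [1, 2] ++ X p' ++ [3] ++ X q')}
      (X p ++ [1] ++ X q) ([1] ++ X (n-1)) ∧
    Deduce {(X p ++ [1] ++ X q ++ [2, 3], [1, 2] ++ X p' ++ [3] ++ X q')}
      (X (n-1) ++ [2]) ([2] ++ X (n-1)) ∧
    Deduce {(X p ++ [1] ++ X q ++ [2, 3], [1, 2] ++ X p' ++ [3] ++ X q')}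
      (X (n-1) ++ [3]) (X p' ++ [3] ++ X q') :=
  stmt7_general n p q p' q' hpq hpq'
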